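/- arXiv:1703.03392 — 5 statements merged into one kernel-verified Lean document; each statement's English description precedes it below -/
import Mathlib

section
/- Let V be a finite-dimensional real vector space ordered by a closed, convex, salient and generating cone C, and let u be an order unit, i.e. a strictly positive functional in the interior of the dual cone C*. Define the base norm ‖x‖ = max { f(x) : f ∈ V*, -u ≤ f ≤ u }. Then for every x ∈ V, ‖x‖ = min { u(x₊) + u(x₋) : x₊, x₋ ∈ C, x = x₊ - x₋ }. -/
/-!
The decomposition mass `N x = inf {u x₊ + u x₋ : x = x₊ - x₋, x₊, x₋ ∈ C}` is sublinear and
satisfies `N (±a) ≤ u a` on `C`. Any `f` with `-u ≤ f ≤ u` gives `f x = f x₊ - f x₋ ≤ u x₊ + u x₋`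
(weak duality), while Hahn–Banach yields a linear `g ≤ N` with `g x = N x`, and this `g` lies in
`[-u, u]`. The infimum is a minimum because `u ∈ int C*` forces `u ≥ ε ‖·‖` on `C`, so the
sublevel sets of the mass are compact.
-/

open Set

section Algebraic

open scoped Pointwise

variable {V : Type*} [AddCommGroup V] [Module ℝ V]

def PointedCone.ofConvex (C : Set V) (hconv : Convex ℝ C)
    (hsmul : ∀ a ∈ C, ∀ t : ℝ, 0 ≤ t → t • a ∈ C) (h0 : (0 : V) ∈ C) : PointedCone ℝ V where
  carrier := C
  zero_mem' := h0
  add_mem' {a b} ha hb := by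
    have hmid := hconv ha hb (by norm_num : (0 : ℝ) ≤ 1 / 2) (by norm_num : (0 : ℝ) ≤ 1 / 2)
      (by norm_num)
    simpa [smul_add, smul_smul] using hsmul _ hmid 2 zero_le_two
  smul_mem' c a ha := hsmul a ha c c.2

theorem PointedCone.sub_eq_univ_of_span_eq_top (K : PointedCone ℝ V)
    (hK : Submodule.span ℝ (K : Set V) = ⊤) : (K : Set V) - (K : Set V) = univ := by
  rcases subsingleton_or_nontrivial V with hV | hV
  · exact eq_univ_of_forall fun x ↦ ⟨0, K.zero_mem, 0, K.zero_mem, Subsingleton.elim _ _⟩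
  · exact (ConvexCone.IsReproducing.of_span_eq_top (C := K.toConvexCone) hK).sub_eq_univ

theorem exists_linear_le_sublinear_eq (N : V → ℝ)
    (N_hom : ∀ c : ℝ, 0 < c → ∀ x, N (c • x) = c * N x) (N_add : ∀ x y, N (x + y) ≤ N x + N y)
    (x : V) : ∃ g : V →ₗ[ℝ] ℝ, g x = N x ∧ ∀ y, g y ≤ N y := by
  have N_zero : N 0 = 0 := by
    have := N_hom 2 two_pos 0
    rw [smul_zero] at this
    linarith
  let f : V →ₗ.[ℝ] ℝ := LinearPMap.mkSpanSingleton' x (N x) fun c hc ↦ by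
    rcases smul_eq_zero.1 hc with rfl | rfl
    · exact zero_smul _ _
    · rw [N_zero, smul_zero]
  have hf : ∀ y : f.domain, f y ≤ N y := by
    rintro ⟨_, hy⟩
    obtain ⟨t, rfl⟩ := Submodule.mem_span_singleton.1 hy
    rw [LinearPMap.mkSpanSingleton'_apply, RingHom.id_apply, smul_eq_mul]
    rcases lt_trichotomy t 0 with ht | rfl | ht
    · have hline : 0 ≤ N x + N (-x) := by simpa [N_zero] using N_add x (-x)
      have hneg : N (t • x) = -t * N (-x) := by
        rw [← N_hom (-t) (neg_pos.2 ht), neg_smul_neg]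
      rw [hneg]
      nlinarith
    · simp [N_zero]
    · rw [N_hom t ht]
  obtain ⟨g, hgf, hgN⟩ := exists_extension_of_le_sublinear f N N_hom N_add hf
  refine ⟨g, ?_, hgN⟩
  have hx : x ∈ f.domain := Submodule.mem_span_singleton_self x
  rw [hgf ⟨x, hx⟩, LinearPMap.mkSpanSingleton'_apply_self]

namespace PointedCone

variable (K : PointedCone ℝ V) (u : V →ₗ[ℝ] ℝ)

def decompMasses (x : V) : Set ℝ :=
  {r | ∃ xp ∈ K, ∃ xm ∈ K, x = xp - xm ∧ r = u xp + u xm}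

noncomputable def decompNorm (x : V) : ℝ :=
  sInf (K.decompMasses u x)

variable {K u}

theorem decompMasses_nonempty (hK : (K : Set V) - (K : Set V) = univ) (x : V) :
    (K.decompMasses u x).Nonempty := by
  obtain ⟨a, ha, b, hb, hab⟩ := hK.symm.subset (mem_univ x)
  exact ⟨u a + u b, a, ha, b, hb, hab.symm, rfl⟩

theorem bddBelow_decompMasses (hu : ∀ a ∈ K, 0 ≤ u a) (x : V) :
    BddBelow (K.decompMasses u x) := by
  refine ⟨0, ?_⟩
  rintro _ ⟨a, ha, b, hb, -, rfl⟩
  exact add_nonneg (hu a ha) (hu b hb)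

theorem decompMasses_add_subset (x y : V) :
    K.decompMasses u x + K.decompMasses u y ⊆ K.decompMasses u (x + y) := by
  rintro _ ⟨_, ⟨a, ha, b, hb, rfl, rfl⟩, _, ⟨a', ha', b', hb', rfl, rfl⟩, rfl⟩
  refine ⟨a + a', K.add_mem ha ha', b + b', K.add_mem hb hb', by abel, ?_⟩
  simp only [map_add]
  ring

theorem smul_decompMasses_subset {c : ℝ} (hc : 0 ≤ c) (x : V) :
    c • K.decompMasses u x ⊆ K.decompMasses u (c • x) := by
  rintro _ ⟨_, ⟨a, ha, b, hb, rfl, rfl⟩, rfl⟩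
  refine ⟨c • a, K.smul_mem hc ha, c • b, K.smul_mem hc hb, smul_sub c a b, ?_⟩
  simp only [map_smul, smul_eq_mul]
  ring

theorem decompMasses_smul {c : ℝ} (hc : 0 < c) (x : V) :
    K.decompMasses u (c • x) = c • K.decompMasses u x := by
  refine (smul_decompMasses_subset hc.le x).antisymm' ?_
  calc K.decompMasses u (c • x) = c • c⁻¹ • K.decompMasses u (c • x) := by
        rw [smul_smul, mul_inv_cancel₀ hc.ne', one_smul]
    _ ⊆ c • K.decompMasses u (c⁻¹ • c • x) :=
        smul_set_mono (smul_decompMasses_subset (inv_nonneg.2 hc.le) _)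
    _ = c • K.decompMasses u x := by rw [inv_smul_smul₀ hc.ne']

theorem decompNorm_smul {c : ℝ} (hc : 0 < c) (x : V) :
    K.decompNorm u (c • x) = c * K.decompNorm u x := by
  rw [decompNorm, decompMasses_smul hc, Real.sInf_smul_of_nonneg hc.le, smul_eq_mul, decompNorm]

theorem decompNorm_add_le (hK : (K : Set V) - (K : Set V) = univ) (hu : ∀ a ∈ K, 0 ≤ u a)
    (x y : V) : K.decompNorm u (x + y) ≤ K.decompNorm u x + K.decompNorm u y := by
  rw [decompNorm, decompNorm, decompNorm, ← csInf_add (decompMasses_nonempty hK x)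
    (bddBelow_decompMasses hu x) (decompMasses_nonempty hK y) (bddBelow_decompMasses hu y)]
  exact csInf_le_csInf (bddBelow_decompMasses hu _)
    ((decompMasses_nonempty hK x).add (decompMasses_nonempty hK y)) (decompMasses_add_subset x y)

theorem decompNorm_sub_le (hu : ∀ a ∈ K, 0 ≤ u a) {a b : V} (ha : a ∈ K) (hb : b ∈ K) :
    K.decompNorm u (a - b) ≤ u a + u b :=
  csInf_le (bddBelow_decompMasses hu _) ⟨a, ha, b, hb, rfl, rfl⟩

theorem exists_linear_abs_le_eq_decompNorm (hK : (K : Set V) - (K : Set V) = univ)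
    (hu : ∀ a ∈ K, 0 ≤ u a) (x : V) :
    ∃ g : V →ₗ[ℝ] ℝ, g x = K.decompNorm u x ∧ ∀ a ∈ K, |g a| ≤ u a := by
  obtain ⟨g, hgx, hg⟩ := exists_linear_le_sublinear_eq (K.decompNorm u)
    (fun c hc ↦ decompNorm_smul hc) (decompNorm_add_le hK hu) x
  refine ⟨g, hgx, fun a ha ↦ abs_le.2 ⟨?_, ?_⟩⟩
  · have := (hg (0 - a)).trans (decompNorm_sub_le hu K.zero_mem ha)
    rw [map_sub, map_zero, map_zero] at this
    linarith
  · simpa using (hg (a - 0)).trans (decompNorm_sub_le hu ha K.zero_mem)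

theorem apply_le_of_mem_decompMasses {f : V →ₗ[ℝ] ℝ} (hf : ∀ a ∈ K, |f a| ≤ u a) {x : V} {r : ℝ}
    (hr : r ∈ K.decompMasses u x) : f x ≤ r := by
  obtain ⟨a, ha, b, hb, rfl, rfl⟩ := hr
  rw [map_sub]
  linarith [(abs_le.1 (hf a ha)).2, (abs_le.1 (hf b hb)).1]

end PointedCone

end Algebraic

section Normed

variable {V : Type*} [NormedAddCommGroup V] [NormedSpace ℝ V]

theorem exists_mul_norm_le_of_mem_interior_dual {C : Set V} {u : V →L[ℝ] ℝ}
    (hu : u ∈ interior {f : V →L[ℝ] ℝ | ∀ a ∈ C, 0 ≤ f a}) :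
    ∃ ε > 0, ∀ a ∈ C, ε * ‖a‖ ≤ u a := by
  obtain ⟨ε, hε, hball⟩ := Metric.mem_nhds_iff.1 (mem_interior_iff_mem_nhds.1 hu)
  refine ⟨ε / 2, half_pos hε, fun a ha ↦ ?_⟩
  rcases eq_or_ne a 0 with rfl | ha0
  · simp
  -- Perturb `u` by a norming functional of `a`; the perturbation stays in the dual cone.
  obtain ⟨g, hg_norm, hg_a⟩ := exists_dual_vector ℝ a (norm_ne_zero_iff.2 ha0)
  have hmem : u - (ε / 2) • g ∈ Metric.ball u ε := by
    rw [Metric.mem_ball, dist_eq_norm, sub_sub_cancel_left, norm_neg, norm_smul, hg_norm,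
      mul_one, Real.norm_of_nonneg (half_pos hε).le]
    exact half_lt_self hε
  have := hball hmem a ha
  simp only [sub_apply, smul_apply, smul_eq_mul, hg_a, RCLike.ofReal_real_eq_id, id_eq] at this
  linarith

theorem PointedCone.exists_isLeast_decompMasses [ProperSpace V] {K : PointedCone ℝ V}
    (hK : IsClosed (K : Set V)) {u : V →L[ℝ] ℝ} {ε : ℝ} (hε : 0 < ε)
    (hu : ∀ a ∈ K, ε * ‖a‖ ≤ u a) {x : V} (hne : (K.decompMasses (u : V →ₗ[ℝ] ℝ) x).Nonempty) :
    ∃ m, IsLeast (K.decompMasses (u : V →ₗ[ℝ] ℝ) x) m := by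
  obtain ⟨_, a₀, ha₀, b₀, hb₀, hx₀, rfl⟩ := hne
  set mass : V × V → ℝ := fun q ↦ u q.1 + u q.2 with hmass
  have hmass_cont : Continuous mass := by fun_prop
  -- Since `u` dominates a multiple of the norm on `K`, this sublevel set is compact.
  let T : Set (V × V) := {q | q.1 ∈ K ∧ q.2 ∈ K ∧ x = q.1 - q.2 ∧ mass q ≤ mass (a₀, b₀)}
  have hT_closed : IsClosed T :=
    (hK.preimage continuous_fst).inter ((hK.preimage continuous_snd).inter
      ((isClosed_eq continuous_const (continuous_fst.sub continuous_snd)).inter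
        (isClosed_le hmass_cont continuous_const)))
  have hT_ball : T ⊆ Metric.closedBall 0 (mass (a₀, b₀) / ε) := by
    rintro ⟨a, b⟩ ⟨ha, hb, -, hle⟩
    have hua := hu a ha
    have hub := hu b hb
    have hna := mul_nonneg hε.le (norm_nonneg a)
    have hnb := mul_nonneg hε.le (norm_nonneg b)
    simp only [hmass] at hle
    rw [mem_closedBall_zero_iff, Prod.norm_def, le_div_iff₀ hε, max_mul_of_nonneg _ _ hε.le]
    exact max_le (by linarith) (by linarith)
  obtain ⟨q, hqT, hqmin⟩ := (Metric.isCompact_of_isClosed_isBounded hT_closed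
    (Metric.isBounded_closedBall.subset hT_ball)).exists_isMinOn
    ⟨(a₀, b₀), ha₀, hb₀, hx₀, le_rfl⟩ hmass_cont.continuousOn
  refine ⟨mass q, ⟨q.1, hqT.1, q.2, hqT.2.1, hqT.2.2.1, rfl⟩, ?_⟩
  rintro _ ⟨a, ha, b, hb, hx, rfl⟩
  by_cases h : mass (a, b) ≤ mass (a₀, b₀)
  · exact hqmin ⟨ha, hb, hx, h⟩
  · exact hqT.2.2.2.trans (le_of_not_ge h)

end Normed

/-- The dual base norm formula in a GPT: the base norm, defined via the order
interval `[-u, u]` in the dual, equals the minimal total mass of a decomposition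
`x = x₊ - x₋` with `x₊, x₋` in the cone. -/
theorem base_norm_dual_formula
    {V : Type*} [NormedAddCommGroup V] [NormedSpace ℝ V] [FiniteDimensional ℝ V]
    (C : Set V) (hclosed : IsClosed C) (hconv : Convex ℝ C)
    (hcone : ∀ a ∈ C, ∀ t : ℝ, 0 ≤ t → t • a ∈ C)
    (hsalient : C ∩ (-C) = {0})
    (hgen : Submodule.span ℝ C = ⊤)
    (u : V →L[ℝ] ℝ)
    (hu : u ∈ interior {f : V →L[ℝ] ℝ | ∀ a ∈ C, 0 ≤ f a})
    (x : V) :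
    ∃ m : ℝ,
      IsGreatest {r : ℝ | ∃ f : V →L[ℝ] ℝ,
        (∀ a ∈ C, 0 ≤ (u - f) a) ∧ (∀ a ∈ C, 0 ≤ (u + f) a) ∧ r = f x} m ∧
      IsLeast {r : ℝ | ∃ xp ∈ C, ∃ xm ∈ C, x = xp - xm ∧ r = u xp + u xm} m := by
  let K := PointedCone.ofConvex C hconv hcone (hsalient.symm.subset rfl).1
  have hK := K.sub_eq_univ_of_span_eq_top hgen
  obtain ⟨ε, hε, hεu⟩ := exists_mul_norm_le_of_mem_interior_dual hu
  obtain ⟨m, hm⟩ := K.exists_isLeast_decompMasses hclosed hε hεu (K.decompMasses_nonempty hK x)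
  obtain ⟨g, hgx, hg⟩ := K.exists_linear_abs_le_eq_decompNorm hK (interior_subset hu) x
  refine ⟨m, ⟨⟨LinearMap.toContinuousLinearMap g, fun a ha ↦ ?_, fun a ha ↦ ?_, ?_⟩, ?_⟩, hm⟩
  · simpa using (abs_le.1 (hg a ha)).2
  · simpa [neg_le_iff_add_nonneg'] using (abs_le.1 (hg a ha)).1
  · exact hm.csInf_eq.symm.trans hgx.symm
  · rintro _ ⟨f, hfu, hfu', rfl⟩
    refine K.apply_le_of_mem_decompMasses (f := f) (fun a ha ↦ abs_le.2 ⟨?_, ?_⟩) hm.1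
    · simpa [neg_le_iff_add_nonneg'] using hfu' a ha
    · simpa using hfu a ha
end

section
/- Let M be a real n × m matrix. Then ‖M‖_{∞→1} ≥ (1/√(2n)) · Σ_{i,j} |M_{ij}|, where ‖M‖_{∞→1} = max_{s ∈ {±1}ⁿ, t ∈ {±1}ᵐ} sᵀ M t. Equivalently, the entrywise ℓ¹-norm |M|₁ = Σ_{i,j}|M_{ij}| satisfies |M|₁ ≤ √(2n) · ‖M‖_{∞→1}. -/
open Matrix Finset

noncomputable def sg (b : Bool) : ℝ := if b then 1 else -1

lemma sg_not (b : Bool) : sg (!b) = - sg b := by cases b <;> norm_num [sg]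
lemma sg_mul_self (b : Bool) : sg b * sg b = 1 := by cases b <;> norm_num [sg]

variable {n : ℕ}

noncomputable def chi (A : Finset (Fin n)) (ε : Fin n → Bool) : ℝ := ∏ i ∈ A, sg (ε i)

def flipc (i : Fin n) (ε : Fin n → Bool) : Fin n → Bool := Function.update ε i (!(ε i))

lemma flipc_same (i : Fin n) (ε : Fin n → Bool) : flipc i ε i = !(ε i) := by
  simp [flipc]

lemma flipc_ne {i j : Fin n} (h : j ≠ i) (ε : Fin n → Bool) : flipc i ε j = ε j := by
  simp [flipc, Function.update_of_ne h]

lemma flipc_invol (i : Fin n) : Function.Involutive (flipc i) := by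
  intro ε; funext j
  by_cases h : j = i
  · subst h; simp [flipc]
  · rw [flipc_ne h, flipc_ne h]

lemma sum_flipc (i : Fin n) (F : (Fin n → Bool) → ℝ) :
    ∑ ε : Fin n → Bool, F (flipc i ε) = ∑ ε : Fin n → Bool, F ε :=
  Function.Bijective.sum_comp (flipc_invol i).bijective F

lemma negall_invol : Function.Involutive (fun (ε : Fin n → Bool) => (fun i => !(ε i))) := by
  intro ε; funext i; simp

lemma sum_negall (F : (Fin n → Bool) → ℝ) :
    ∑ ε : Fin n → Bool, F (fun i => !(ε i)) = ∑ ε : Fin n → Bool, F ε :=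
  Function.Bijective.sum_comp negall_invol.bijective F

lemma kernel (ε δ : Fin n → Bool) :
    ∑ A ∈ (univ : Finset (Fin n)).powerset, chi A ε * chi A δ
      = if ε = δ then (2:ℝ)^n else 0 := by
  have h1 : ∀ A ∈ (univ : Finset (Fin n)).powerset,
      chi A ε * chi A δ = (∏ i ∈ A, (sg (ε i) * sg (δ i))) * ∏ i ∈ (univ : Finset (Fin n)) \ A, (1:ℝ) := by
    intro A _
    rw [prod_const_one, mul_one, chi, chi, prod_mul_distrib]
  rw [sum_congr rfl h1, ← prod_add]
  by_cases h : ε = δ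
  · subst h
    rw [if_pos rfl]
    have h2 : ∀ i ∈ (univ : Finset (Fin n)), sg (ε i) * sg (ε i) + 1 = 2 := by
      intro i _; rw [sg_mul_self]; norm_num
    rw [prod_congr rfl h2, prod_const]
    simp
  · rw [if_neg h]
    have : ∃ i, ε i ≠ δ i := by
      by_contra hc; push_neg at hc; exact h (funext hc)
    obtain ⟨i, hi⟩ := this
    apply prod_eq_zero (mem_univ i)
    revert hi; cases ε i <;> cases δ i <;> norm_num [sg]

lemma parseval (f g : (Fin n → Bool) → ℝ) :
    ∑ A ∈ (univ : Finset (Fin n)).powerset,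
      (∑ ε : Fin n → Bool, f ε * chi A ε) * (∑ δ : Fin n → Bool, g δ * chi A δ)
      = 2^n * ∑ ε : Fin n → Bool, f ε * g ε := by
  have expand : ∀ A ∈ (univ : Finset (Fin n)).powerset,
      (∑ ε : Fin n → Bool, f ε * chi A ε) * (∑ δ : Fin n → Bool, g δ * chi A δ)
      = ∑ ε : Fin n → Bool, ∑ δ : Fin n → Bool, f ε * g δ * (chi A ε * chi A δ) := by
    intro A _
    rw [sum_mul_sum]
    exact sum_congr rfl fun ε _ => sum_congr rfl fun δ _ => by ring
  rw [sum_congr rfl expand, Finset.sum_comm]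
  have inner : ∀ ε : Fin n → Bool,
      ∑ A ∈ (univ : Finset (Fin n)).powerset, ∑ δ : Fin n → Bool, f ε * g δ * (chi A ε * chi A δ)
      = f ε * g ε * 2^n := by
    intro ε
    rw [Finset.sum_comm]
    have h3 : ∀ δ : Fin n → Bool,
        ∑ A ∈ (univ : Finset (Fin n)).powerset, f ε * g δ * (chi A ε * chi A δ)
        = if δ = ε then f ε * g ε * 2^n else 0 := by
      intro δ
      rw [← mul_sum, kernel]
      by_cases h : ε = δ
      · subst h; simp
      · rw [if_neg h, if_neg (fun hc => h hc.symm), mul_zero]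
    rw [sum_congr rfl fun δ _ => h3 δ, Finset.sum_ite_eq' univ ε, if_pos (mem_univ ε)]
  rw [sum_congr rfl fun ε _ => inner ε, ← sum_mul, mul_comm]

lemma chi_flip (i : Fin n) (A : Finset (Fin n)) (ε : Fin n → Bool) :
    chi A (flipc i ε) = (if i ∈ A then (-1:ℝ) else 1) * chi A ε := by
  by_cases hi : i ∈ A
  · rw [if_pos hi, chi, chi, ← Finset.mul_prod_erase A _ hi, ← Finset.mul_prod_erase A _ hi]
    have h1 : sg (flipc i ε i) = - sg (ε i) := by rw [flipc_same, sg_not]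
    have h2 : ∏ j ∈ A.erase i, sg (flipc i ε j) = ∏ j ∈ A.erase i, sg (ε j) :=
      prod_congr rfl fun j hj => by rw [flipc_ne (Finset.ne_of_mem_erase hj)]
    rw [h1, h2]; ring
  · rw [if_neg hi, one_mul, chi, chi]
    exact prod_congr rfl fun j hj => by rw [flipc_ne (fun h : j = i => hi (h ▸ hj))]

lemma flip_fourier (f : (Fin n → Bool) → ℝ) (i : Fin n) (A : Finset (Fin n)) :
    ∑ ε : Fin n → Bool, f (flipc i ε) * chi A ε
      = (if i ∈ A then (-1:ℝ) else 1) * ∑ ε : Fin n → Bool, f ε * chi A ε := by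
  calc ∑ ε : Fin n → Bool, f (flipc i ε) * chi A ε
      = ∑ ε : Fin n → Bool, (fun ε => f ε * chi A (flipc i ε)) (flipc i ε) := by
        refine sum_congr rfl fun ε _ => ?_
        simp only []
        rw [flipc_invol i ε]
    _ = ∑ ε : Fin n → Bool, f ε * chi A (flipc i ε) := sum_flipc i (fun ε => f ε * chi A (flipc i ε))
    _ = ∑ ε : Fin n → Bool, f ε * ((if i ∈ A then (-1:ℝ) else 1) * chi A ε) :=
        sum_congr rfl fun ε _ => by rw [chi_flip]
    _ = (if i ∈ A then (-1:ℝ) else 1) * ∑ ε : Fin n → Bool, f ε * chi A ε := by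
        rw [mul_sum]; exact sum_congr rfl fun ε _ => by ring

lemma odd_fourier (f : (Fin n → Bool) → ℝ) (hf : ∀ ε : Fin n → Bool, f (fun i => !(ε i)) = f ε)
    (A : Finset (Fin n)) (hA : Odd A.card) : ∑ ε : Fin n → Bool, f ε * chi A ε = 0 := by
  have key := sum_negall (fun ε => f ε * chi A ε)
  have h2 : ∀ ε : Fin n → Bool, chi A (fun i => !(ε i)) = - chi A ε := by
    intro ε
    rw [chi, chi]
    calc ∏ i ∈ A, sg (!(ε i)) = ∏ i ∈ A, (-1) * sg (ε i) :=
          prod_congr rfl fun i _ => by rw [sg_not]; ring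
      _ = (-1)^A.card * ∏ i ∈ A, sg (ε i) := by rw [prod_mul_distrib, prod_const]
      _ = - ∏ i ∈ A, sg (ε i) := by rw [hA.neg_one_pow]; ring
  have h3 : ∑ ε : Fin n → Bool, f ε * chi A ε = - ∑ ε : Fin n → Bool, f ε * chi A ε := by
    conv_lhs => rw [← key]
    rw [← Finset.sum_neg_distrib]
    exact sum_congr rfl fun ε _ => by rw [hf ε, h2 ε]; ring
  linarith

lemma sum_sg_mul {i j : Fin n} (hij : i ≠ j) :
    ∑ ε : Fin n → Bool, sg (ε i) * sg (ε j) = 0 := by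
  have key := sum_flipc i (fun ε => sg (ε i) * sg (ε j))
  have h2 : ∀ ε : Fin n → Bool, sg (flipc i ε i) * sg (flipc i ε j)
      = -(sg (ε i) * sg (ε j)) := by
    intro ε
    rw [flipc_same, flipc_ne (Ne.symm hij), sg_not]; ring
  have h3 : ∑ ε : Fin n → Bool, sg (ε i) * sg (ε j)
      = - ∑ ε : Fin n → Bool, sg (ε i) * sg (ε j) := by
    conv_lhs => rw [← key]
    rw [← Finset.sum_neg_distrib]
    exact sum_congr rfl fun ε _ => h2 ε
  linarith

lemma sum_sq_signs (c : Fin n → ℝ) :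
    ∑ ε : Fin n → Bool, (∑ i, sg (ε i) * c i)^2 = 2^n * ∑ i, c i^2 := by
  have expand : ∀ ε ∈ (univ : Finset (Fin n → Bool)), (∑ i, sg (ε i) * c i)^2
      = ∑ i, ∑ j, (c i * c j) * (sg (ε i) * sg (ε j)) := by
    intro ε _
    rw [sq, sum_mul_sum]
    exact sum_congr rfl fun i _ => sum_congr rfl fun j _ => by ring
  rw [sum_congr rfl expand, Finset.sum_comm]
  have inner : ∀ i : Fin n,
      ∑ ε : Fin n → Bool, ∑ j, (c i * c j) * (sg (ε i) * sg (ε j)) = c i ^2 * 2^n := by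
    intro i
    rw [Finset.sum_comm]
    have h3 : ∀ j : Fin n, ∑ ε : Fin n → Bool, (c i * c j) * (sg (ε i) * sg (ε j))
        = if j = i then c i ^2 * 2^n else 0 := by
      intro j
      rw [← mul_sum]
      by_cases h : j = i
      · subst h
        rw [if_pos rfl]
        have : ∑ ε : Fin n → Bool, sg (ε j) * sg (ε j) = 2^n := by
          rw [sum_congr rfl fun ε _ => sg_mul_self (ε j), sum_const, card_univ]
          simp [Fintype.card_fun]
        rw [this]; ring
      · rw [if_neg h, sum_sg_mul (fun hc => h hc.symm), mul_zero]
    rw [sum_congr rfl fun j _ => h3 j, Finset.sum_ite_eq' univ i, if_pos (mem_univ i)]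
  rw [sum_congr rfl fun ε _ => inner ε, ← sum_mul, mul_comm]

lemma khint_sq (c : Fin n → ℝ) :
    (2:ℝ)^n * ∑ ε : Fin n → Bool, (∑ i, sg (ε i) * c i)^2
      ≤ 2 * (∑ ε : Fin n → Bool, |∑ i, sg (ε i) * c i|)^2 := by
  set f : (Fin n → Bool) → ℝ := fun ε => |∑ i, sg (ε i) * c i| with hf
  set P : Finset (Finset (Fin n)) := (univ : Finset (Fin n)).powerset with hP
  set H : Finset (Fin n) → ℝ := fun A => ∑ ε : Fin n → Bool, f ε * chi A ε with hH
  have hfnn : ∀ ε, 0 ≤ f ε := fun ε => abs_nonneg _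
  have hfeven : ∀ ε : Fin n → Bool, f (fun i => !(ε i)) = f ε := by
    intro ε
    have h : ∑ i, sg (!(ε i)) * c i = - ∑ i, sg (ε i) * c i := by
      rw [← Finset.sum_neg_distrib]
      exact sum_congr rfl fun i _ => by rw [sg_not]; ring
    simp only [hf, h, abs_neg]
  have hparseval : ∑ A ∈ P, H A ^ 2 = 2^n * ∑ ε : Fin n → Bool, f ε ^2 := by
    have h := parseval f f
    calc ∑ A ∈ P, H A ^ 2 = ∑ A ∈ P, H A * H A := sum_congr rfl fun A _ => sq (H A)
      _ = 2^n * ∑ ε : Fin n → Bool, f ε * f ε := h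
      _ = 2^n * ∑ ε : Fin n → Bool, f ε ^2 := by
          rw [sum_congr rfl fun (ε : Fin n → Bool) _ => (sq (f ε)).symm]
  have hoddz : ∀ A : Finset (Fin n), Odd A.card → H A = 0 :=
    fun A hA => odd_fourier f hfeven A hA
  have hempty : H ∅ = ∑ ε : Fin n → Bool, f ε := by
    rw [hH]
    exact sum_congr rfl fun ε _ => by rw [chi, prod_empty, mul_one]
  -- pointwise bound : (n-2) f ε ≤ ∑ i, f (flipc i ε)
  have hpoint : ∀ ε : Fin n → Bool, ((n:ℝ) - 2) * f ε ≤ ∑ i, f (flipc i ε) := by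
    intro ε
    have hsum : ∑ i : Fin n, (∑ j, sg (flipc i ε j) * c j)
        = ((n:ℝ) - 2) * ∑ j, sg (ε j) * c j := by
      rw [Finset.sum_comm]
      have hrow : ∀ j : Fin n, ∑ i : Fin n, sg (flipc i ε j) * c j
          = ((n:ℝ) - 2) * (sg (ε j) * c j) := by
        intro j
        rw [← Finset.add_sum_erase univ _ (mem_univ j)]
        have hgj : sg (flipc j ε j) * c j = -(sg (ε j) * c j) := by
          rw [flipc_same, sg_not]; ring
        have hrest : ∑ i ∈ univ.erase j, sg (flipc i ε j) * c j
            = ((n:ℝ) - 1) * (sg (ε j) * c j) := by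
          rw [sum_congr rfl (fun i hi => by
            rw [flipc_ne (Finset.ne_of_mem_erase hi).symm])]
          rw [sum_const, card_erase_of_mem (mem_univ j), card_univ, Fintype.card_fin]
          have hn : 1 ≤ n := j.pos
          rw [nsmul_eq_mul, Nat.cast_sub hn, Nat.cast_one]
        rw [hgj, hrest]; ring
      rw [sum_congr rfl fun j _ => hrow j, ← mul_sum]
    calc ((n:ℝ) - 2) * f ε ≤ |((n:ℝ) - 2)| * f ε :=
          mul_le_mul_of_nonneg_right (le_abs_self _) (hfnn ε)
      _ = |((n:ℝ) - 2) * ∑ j, sg (ε j) * c j| := by rw [abs_mul, hf]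
      _ = |∑ i : Fin n, (∑ j, sg (flipc i ε j) * c j)| := by rw [hsum]
      _ ≤ ∑ i : Fin n, |∑ j, sg (flipc i ε j) * c j| := Finset.abs_sum_le_sum_abs _ _
      _ = ∑ i, f (flipc i ε) := rfl
  -- per-coordinate Fourier identity
  have hflip2 : ∀ i : Fin n, ∑ A ∈ P, (if i ∈ A then (2:ℝ) else 0) * H A^2
      = 2^n * (∑ ε : Fin n → Bool, f ε^2) - 2^n * ∑ ε : Fin n → Bool, f ε * f (flipc i ε) := by
    intro i
    have h1 : ∑ A ∈ P, (∑ ε : Fin n → Bool, f ε * chi A ε)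
          * (∑ δ : Fin n → Bool, f (flipc i δ) * chi A δ)
        = 2^n * ∑ ε : Fin n → Bool, f ε * f (flipc i ε) :=
      parseval f (fun ε => f (flipc i ε))
    have h2 : ∀ A ∈ P, (∑ ε : Fin n → Bool, f ε * chi A ε)
          * (∑ δ : Fin n → Bool, f (flipc i δ) * chi A δ)
        = (if i ∈ A then (-1:ℝ) else 1) * H A^2 := by
      intro A _
      rw [flip_fourier f i A]
      have hHA : (∑ ε : Fin n → Bool, f ε * chi A ε) = H A := rfl
      rw [hHA]; ring
    have h3 : ∑ A ∈ P, (if i ∈ A then (-1:ℝ) else 1) * H A^2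
        = 2^n * ∑ ε : Fin n → Bool, f ε * f (flipc i ε) := by
      rw [← sum_congr rfl h2]; exact h1
    have h4 : ∀ A ∈ P, (if i ∈ A then (2:ℝ) else 0) * H A^2
        = H A^2 - (if i ∈ A then (-1:ℝ) else 1) * H A^2 := by
      intro A _
      by_cases h : i ∈ A <;> (simp [h]; try ring)
    rw [sum_congr rfl h4, Finset.sum_sub_distrib, hparseval, h3]
  -- card-weighted Parseval bound
  have hcard : ∑ A ∈ P, (A.card : ℝ) * H A^2 ≤ 2^n * ∑ ε : Fin n → Bool, f ε^2 := by
    have lhs2 : ∑ i : Fin n, ∑ A ∈ P, (if i ∈ A then (2:ℝ) else 0) * H A^2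
        = 2 * ∑ A ∈ P, (A.card:ℝ) * H A^2 := by
      rw [Finset.sum_comm, mul_sum]
      refine sum_congr rfl fun A _ => ?_
      rw [← sum_mul]
      have hs : ∑ i : Fin n, (if i ∈ A then (2:ℝ) else 0) = 2 * A.card := by
        rw [Finset.sum_ite_mem, univ_inter, sum_const, nsmul_eq_mul]
        ring
      rw [hs]; ring
    have rhs2 : ∑ i : Fin n, (2^n * (∑ ε : Fin n → Bool, f ε^2)
          - 2^n * ∑ ε : Fin n → Bool, f ε * f (flipc i ε))
        ≤ 2 * (2^n * ∑ ε : Fin n → Bool, f ε^2) := by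
      rw [Finset.sum_sub_distrib, sum_const, card_univ, Fintype.card_fin, ← mul_sum]
      have hcross : ((n:ℝ) - 2) * ∑ ε : Fin n → Bool, f ε^2
          ≤ ∑ i : Fin n, ∑ ε : Fin n → Bool, f ε * f (flipc i ε) := by
        rw [Finset.sum_comm, mul_sum]
        refine sum_le_sum fun ε _ => ?_
        rw [← mul_sum]
        calc ((n:ℝ) - 2) * f ε ^2 = (((n:ℝ) - 2) * f ε) * f ε := by ring
          _ ≤ (∑ i, f (flipc i ε)) * f ε :=
              mul_le_mul_of_nonneg_right (hpoint ε) (hfnn ε)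
          _ = f ε * ∑ i, f (flipc i ε) := by ring
      have hnn : (0:ℝ) ≤ 2^n := by positivity
      have := mul_le_mul_of_nonneg_left hcross hnn
      rw [nsmul_eq_mul]
      ring_nf
      ring_nf at this
      nlinarith [this]
    have := (lhs2.symm.trans_le) ((sum_le_sum fun i _ => (hflip2 i).le).trans rhs2)
    linarith
  -- the spectral comparison
  have hemem : (∅ : Finset (Fin n)) ∈ P := by simp [hP]
  have hsplit : ∑ A ∈ P, H A^2 = H ∅^2 + ∑ A ∈ P.erase ∅, H A^2 :=
    (Finset.add_sum_erase P (fun A => H A^2) hemem).symm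
  have hstep : ∑ A ∈ P.erase ∅, H A^2 ≤ ∑ A ∈ P.erase ∅, ((A.card:ℝ) - 1) * H A^2 := by
    refine sum_le_sum fun A hA => ?_
    have hAne : A ≠ ∅ := Finset.ne_of_mem_erase hA
    by_cases hodd : Odd A.card
    · rw [hoddz A hodd]; simp
    · have heven : Even A.card := Nat.not_odd_iff_even.mp hodd
      have h2le : 2 ≤ A.card := by
        obtain ⟨r, hr⟩ := heven
        have h0 : A.card ≠ 0 := fun h => hAne (Finset.card_eq_zero.mp h)
        omega
      have h1le : (1:ℝ) ≤ (A.card:ℝ) - 1 := by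
        have : (2:ℝ) ≤ (A.card:ℝ) := by exact_mod_cast h2le
        linarith
      nlinarith [sq_nonneg (H A)]
  have hsum2 : ∑ A ∈ P, ((A.card:ℝ) - 1) * H A^2
      = -(H ∅^2) + ∑ A ∈ P.erase ∅, ((A.card:ℝ) - 1) * H A^2 := by
    rw [← Finset.add_sum_erase P (fun A => ((A.card:ℝ) - 1) * H A^2) hemem]
    norm_num
  have hneg : ∑ A ∈ P, ((A.card:ℝ) - 1) * H A^2 ≤ 0 := by
    have hd : ∑ A ∈ P, ((A.card:ℝ) - 1) * H A^2
        = ∑ A ∈ P, (A.card:ℝ) * H A^2 - ∑ A ∈ P, H A^2 := by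
      rw [← Finset.sum_sub_distrib]
      exact sum_congr rfl fun A _ => by ring
    rw [hd, hparseval]
    linarith
  have main : (2:ℝ)^n * ∑ ε : Fin n → Bool, f ε^2 ≤ 2 * (∑ ε : Fin n → Bool, f ε)^2 := by
    have h5 : ∑ A ∈ P.erase ∅, ((A.card:ℝ) - 1) * H A^2 ≤ H ∅^2 := by linarith
    have h6 : ∑ A ∈ P, H A^2 ≤ 2 * H ∅^2 := by linarith
    rw [← hempty, ← hparseval]
    exact h6
  have hfs : ∀ ε ∈ (univ : Finset (Fin n → Bool)), (∑ i, sg (ε i) * c i)^2 = f ε ^2 := by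
    intro ε _
    rw [hf]; rw [sq_abs]
  rw [sum_congr rfl hfs]
  exact main

lemma khint (c : Fin n → ℝ) :
    (2:ℝ)^n * Real.sqrt (∑ i, c i^2)
      ≤ Real.sqrt 2 * ∑ ε : Fin n → Bool, |∑ i, sg (ε i) * c i| := by
  have hF : 0 ≤ ∑ ε : Fin n → Bool, |∑ i, sg (ε i) * c i| :=
    sum_nonneg fun ε _ => abs_nonneg _
  have hc : 0 ≤ ∑ i, c i^2 := sum_nonneg fun i _ => sq_nonneg _
  have hsq : ((2:ℝ)^n * Real.sqrt (∑ i, c i^2))^2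
      ≤ (Real.sqrt 2 * ∑ ε : Fin n → Bool, |∑ i, sg (ε i) * c i|)^2 := by
    rw [mul_pow, mul_pow, Real.sq_sqrt hc, Real.sq_sqrt (by norm_num : (0:ℝ) ≤ 2)]
    calc ((2:ℝ)^n)^2 * ∑ i, c i^2 = (2:ℝ)^n * ((2:ℝ)^n * ∑ i, c i^2) := by ring
      _ = (2:ℝ)^n * ∑ ε : Fin n → Bool, (∑ i, sg (ε i) * c i)^2 := by rw [sum_sq_signs]
      _ ≤ 2 * (∑ ε : Fin n → Bool, |∑ i, sg (ε i) * c i|)^2 := khint_sq c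
  have h1 : (0:ℝ) ≤ (2:ℝ)^n * Real.sqrt (∑ i, c i^2) :=
    mul_nonneg (by positivity) (Real.sqrt_nonneg _)
  have h2 : (0:ℝ) ≤ Real.sqrt 2 * ∑ ε : Fin n → Bool, |∑ i, sg (ε i) * c i| :=
    mul_nonneg (Real.sqrt_nonneg _) hF
  calc (2:ℝ)^n * Real.sqrt (∑ i, c i^2)
      = Real.sqrt (((2:ℝ)^n * Real.sqrt (∑ i, c i^2))^2) := (Real.sqrt_sq h1).symm
    _ ≤ Real.sqrt ((Real.sqrt 2 * ∑ ε : Fin n → Bool, |∑ i, sg (ε i) * c i|)^2) :=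
        Real.sqrt_le_sqrt hsq
    _ = Real.sqrt 2 * ∑ ε : Fin n → Bool, |∑ i, sg (ε i) * c i| := Real.sqrt_sq h2

lemma l1_le_sqrt_l2 (c : Fin n → ℝ) :
    ∑ i, |c i| ≤ Real.sqrt n * Real.sqrt (∑ i, c i^2) := by
  have h := Finset.sum_mul_sq_le_sq_mul_sq univ (fun _ => (1:ℝ)) (fun i => |c i|)
  simp only [one_pow, one_mul, sq_abs, sum_const, card_univ, Fintype.card_fin,
    nsmul_eq_mul, mul_one] at h
  have hnn : 0 ≤ ∑ i, |c i| := sum_nonneg fun i _ => abs_nonneg _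
  calc ∑ i, |c i| = Real.sqrt ((∑ i, |c i|)^2) := (Real.sqrt_sq hnn).symm
    _ ≤ Real.sqrt ((n:ℝ) * ∑ i, c i^2) := Real.sqrt_le_sqrt h
    _ = Real.sqrt n * Real.sqrt (∑ i, c i^2) := Real.sqrt_mul (Nat.cast_nonneg n) _

/-- The entrywise `ℓ¹` norm of a real `n × m` matrix is at most `√(2n)` times its
`∞ → 1` norm `max_{s,t ∈ {±1}} sᵀ M t`. -/
theorem l1_le_sqrt_two_n_mul_inftyOne {n m : ℕ} (M : Matrix (Fin n) (Fin m) ℝ) :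
    ∑ i, ∑ j, |M i j| ≤ Real.sqrt (2 * n) *
      sSup {x : ℝ | ∃ (s : Fin n → ℝ) (t : Fin m → ℝ),
        (∀ i, s i = 1 ∨ s i = -1) ∧ (∀ j, t j = 1 ∨ t j = -1) ∧
        x = dotProduct s (M.mulVec t)} := by
  classical
  set S : Set ℝ := {x : ℝ | ∃ (s : Fin n → ℝ) (t : Fin m → ℝ),
      (∀ i, s i = 1 ∨ s i = -1) ∧ (∀ j, t j = 1 ∨ t j = -1) ∧
      x = dotProduct s (M.mulVec t)} with hS
  -- S is finite, hence bounded above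
  have hsub : S ⊆ Set.range (fun p : (Fin n → Bool) × (Fin m → Bool) =>
      dotProduct (fun i => sg (p.1 i)) (M.mulVec (fun j => sg (p.2 j)))) := by
    rintro x ⟨s, t, hs, ht, hx⟩
    refine ⟨⟨fun i => decide (s i = 1), fun j => decide (t j = 1)⟩, ?_⟩
    have hs' : ∀ i, sg (decide (s i = 1)) = s i := by
      intro i
      rcases hs i with h | h <;>
        simp [h, sg, show (-1:ℝ) ≠ 1 by norm_num]
    have ht' : ∀ j, sg (decide (t j = 1)) = t j := by
      intro j
      rcases ht j with h | h <;>
        simp [h, sg, show (-1:ℝ) ≠ 1 by norm_num]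
    simp only [funext hs', funext ht']
    exact hx.symm
  have hbdd : BddAbove S := (Set.Finite.subset (Set.finite_range _) hsub).bddAbove
  -- every sign pattern gives an element of S
  have hmem : ∀ ε : Fin n → Bool, (∑ j, |∑ i, sg (ε i) * M i j|) ∈ S := by
    intro ε
    set t : Fin m → ℝ := fun j => if 0 ≤ ∑ i, sg (ε i) * M i j then 1 else -1 with hT
    refine ⟨fun i => sg (ε i), t, ?_, ?_, ?_⟩
    · intro i
      cases hb : ε i
      · exact Or.inr (by simp [sg, hb])
      · exact Or.inl (by simp [sg, hb])
    · intro j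
      by_cases h : 0 ≤ ∑ i, sg (ε i) * M i j
      · exact Or.inl (by simp [hT, h])
      · exact Or.inr (by simp [hT, h])
    · have hdef : dotProduct (fun i => sg (ε i)) (M.mulVec t)
          = ∑ i, sg (ε i) * ∑ j, M i j * t j := rfl
      rw [hdef]
      have hswap : ∀ i ∈ (univ : Finset (Fin n)), sg (ε i) * ∑ j, M i j * t j
          = ∑ j, sg (ε i) * M i j * t j := by
        intro i _
        rw [mul_sum]
        exact sum_congr rfl fun j _ => by ring
      rw [sum_congr rfl hswap, Finset.sum_comm]
      refine sum_congr rfl fun j _ => ?_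
      rw [← sum_mul]
      by_cases h : 0 ≤ ∑ i, sg (ε i) * M i j
      · rw [abs_of_nonneg h, hT]; simp [h]
      · rw [abs_of_neg (lt_of_not_ge h), hT]; simp [h]
  -- upper bound via sSup
  have havg : ∑ ε : Fin n → Bool, ∑ j, |∑ i, sg (ε i) * M i j| ≤ 2^n * sSup S := by
    calc ∑ ε : Fin n → Bool, ∑ j, |∑ i, sg (ε i) * M i j|
        ≤ ∑ _ε : Fin n → Bool, sSup S :=
          sum_le_sum fun ε _ => le_csSup hbdd (hmem ε)
      _ = 2^n * sSup S := by
          rw [sum_const, card_univ, Fintype.card_fun, Fintype.card_bool, Fintype.card_fin,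
            nsmul_eq_mul, Nat.cast_pow]
          norm_num
  -- lower bound via Khintchine per column
  have hlow : (2:ℝ)^n * ∑ j, ∑ i, |M i j|
      ≤ Real.sqrt (2 * n) * ∑ ε : Fin n → Bool, ∑ j, |∑ i, sg (ε i) * M i j| := by
    rw [Finset.sum_comm (s := (univ : Finset (Fin n → Bool)))]
    rw [mul_sum, mul_sum]
    refine sum_le_sum fun j _ => ?_
    have hcol := khint (fun i => M i j)
    have hl1 := l1_le_sqrt_l2 (fun i => M i j)
    have hsqrt2 : Real.sqrt (2 * n) = Real.sqrt 2 * Real.sqrt n := by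
      rw [Real.sqrt_mul (by norm_num : (0:ℝ) ≤ 2)]
    calc (2:ℝ)^n * ∑ i, |M i j|
        ≤ (2:ℝ)^n * (Real.sqrt n * Real.sqrt (∑ i, (M i j)^2)) :=
          mul_le_mul_of_nonneg_left hl1 (by positivity)
      _ = Real.sqrt n * ((2:ℝ)^n * Real.sqrt (∑ i, (M i j)^2)) := by ring
      _ ≤ Real.sqrt n * (Real.sqrt 2 * ∑ ε : Fin n → Bool, |∑ i, sg (ε i) * M i j|) :=
          mul_le_mul_of_nonneg_left hcol (Real.sqrt_nonneg _)
      _ = Real.sqrt (2 * n) * ∑ ε : Fin n → Bool, |∑ i, sg (ε i) * M i j| := by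
          rw [hsqrt2]; ring
  have hfinal : (2:ℝ)^n * (∑ i, ∑ j, |M i j|) ≤ (2:ℝ)^n * (Real.sqrt (2 * n) * sSup S) := by
    calc (2:ℝ)^n * (∑ i, ∑ j, |M i j|) = (2:ℝ)^n * ∑ j, ∑ i, |M i j| := by
          rw [Finset.sum_comm]
      _ ≤ Real.sqrt (2 * n) * ∑ ε : Fin n → Bool, ∑ j, |∑ i, sg (ε i) * M i j| := hlow
      _ ≤ Real.sqrt (2 * n) * (2^n * sSup S) :=
          mul_le_mul_of_nonneg_left havg (Real.sqrt_nonneg _)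
      _ = (2:ℝ)^n * (Real.sqrt (2 * n) * sSup S) := by ring
  have h2pos : (0:ℝ) < 2^n := by positivity
  exact le_of_mul_le_mul_left hfinal h2pos
end

section
/- For every c ∈ ℝⁿ and i.i.d. uniform random signs s₁, …, s_n ∈ {±1}, the expectation satisfies E|Σᵢ₌₁ⁿ sᵢ cᵢ| ≥ (Σᵢ cᵢ²)^{1/2} / √2. -/
open Finset

namespace Khin

noncomputable def Ex (n : ℕ) (f : (Fin n → Bool) → ℝ) : ℝ := (∑ s, f s) / 2 ^ n

def flip {n : ℕ} (i : Fin n) (s : Fin n → Bool) : Fin n → Bool :=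
  Function.update s i (!(s i))

noncomputable def D {n : ℕ} (i : Fin n) (f : (Fin n → Bool) → ℝ) (s : Fin n → Bool) : ℝ :=
  (f s - f (flip i s)) / 2

noncomputable def gpart {n : ℕ} (f : (Fin (n+1) → Bool) → ℝ) : (Fin n → Bool) → ℝ :=
  fun t => (f (Fin.cons true t) + f (Fin.cons false t)) / 2

noncomputable def dpart {n : ℕ} (f : (Fin (n+1) → Bool) → ℝ) : (Fin n → Bool) → ℝ :=
  fun t => (f (Fin.cons true t) - f (Fin.cons false t)) / 2

lemma sum_cube_succ {n : ℕ} (F : (Fin (n+1) → Bool) → ℝ) :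
    ∑ s, F s = ∑ t : Fin n → Bool, (F (Fin.cons true t) + F (Fin.cons false t)) := by
  rw [← (Fin.consEquiv (fun _ => Bool)).sum_comp F, Fintype.sum_prod_type, Fintype.sum_bool]
  rw [← Finset.sum_add_distrib]
  rfl

lemma Ex_succ {n : ℕ} (F : (Fin (n+1) → Bool) → ℝ) :
    Ex (n+1) F = Ex n (fun t => (F (Fin.cons true t) + F (Fin.cons false t)) / 2) := by
  unfold Ex
  rw [sum_cube_succ, ← Finset.sum_div]
  rw [pow_succ, div_div, mul_comm]

lemma Ex_add {n : ℕ} (f g : (Fin n → Bool) → ℝ) :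
    Ex n (fun s => f s + g s) = Ex n f + Ex n g := by
  unfold Ex; rw [Finset.sum_add_distrib, add_div]

lemma Ex_const {n : ℕ} (a : ℝ) : Ex n (fun _ => a) = a := by
  unfold Ex
  rw [Finset.sum_const]
  simp [Finset.card_univ]

lemma Ex_mono {n : ℕ} {f g : (Fin n → Bool) → ℝ} (h : ∀ s, f s ≤ g s) :
    Ex n f ≤ Ex n g := by
  unfold Ex
  gcongr with s
  exact h s

lemma Ex_nonneg {n : ℕ} {f : (Fin n → Bool) → ℝ} (h : ∀ s, 0 ≤ f s) : 0 ≤ Ex n f := by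
  have := Ex_mono (n := n) (f := fun _ => (0:ℝ)) (g := f) h
  rwa [Ex_const] at this

lemma flip_cons_zero {n : ℕ} (b : Bool) (t : Fin n → Bool) :
    flip 0 (Fin.cons b t) = Fin.cons (!b) t := by
  unfold flip
  rw [Fin.cons_zero, Fin.update_cons_zero]

lemma flip_cons_succ {n : ℕ} (i : Fin n) (b : Bool) (t : Fin n → Bool) :
    flip i.succ (Fin.cons b t) = Fin.cons b (flip i t) := by
  unfold flip
  rw [Fin.cons_succ, Fin.cons_update]

lemma Ex_sq_succ {n : ℕ} (f : (Fin (n+1) → Bool) → ℝ) :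
    Ex (n+1) (fun s => f s ^ 2)
      = Ex n (fun t => gpart f t ^ 2) + Ex n (fun t => dpart f t ^ 2) := by
  rw [Ex_succ, ← Ex_add]
  congr 1
  funext t
  unfold gpart dpart
  ring

lemma Ex_D0 {n : ℕ} (f : (Fin (n+1) → Bool) → ℝ) :
    Ex (n+1) (fun s => D 0 f s ^ 2) = Ex n (fun t => dpart f t ^ 2) := by
  rw [Ex_succ]
  congr 1
  funext t
  unfold D dpart
  rw [flip_cons_zero, flip_cons_zero]
  simp only [Bool.not_true, Bool.not_false]
  ring

lemma Ex_Dsucc {n : ℕ} (i : Fin n) (f : (Fin (n+1) → Bool) → ℝ) :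
    Ex (n+1) (fun s => D i.succ f s ^ 2)
      = Ex n (fun t => D i (gpart f) t ^ 2) + Ex n (fun t => D i (dpart f) t ^ 2) := by
  rw [Ex_succ, ← Ex_add]
  congr 1
  funext t
  unfold D gpart dpart
  rw [flip_cons_succ, flip_cons_succ]
  ring

theorem poincare1 : ∀ (n : ℕ) (f : (Fin n → Bool) → ℝ),
    Ex n (fun s => f s ^ 2) - (Ex n f) ^ 2 ≤ ∑ i, Ex n (fun s => D i f s ^ 2)
  | 0, f => by
    simp [Ex]
  | (n+1), f => by
    have IH := poincare1 n (gpart f)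
    have hd : 0 ≤ Ex n (fun t => dpart f t ^ 2) := Ex_nonneg fun s => sq_nonneg _
    rw [Ex_sq_succ, Ex_succ f, Fin.sum_univ_succ, Ex_D0]
    have hsum : ∑ i : Fin n, Ex (n+1) (fun s => D (Fin.succ i) f s ^ 2)
        = ∑ i : Fin n, (Ex n (fun t => D i (gpart f) t ^ 2) + Ex n (fun t => D i (dpart f) t ^ 2)) :=
      Finset.sum_congr rfl fun i _ => Ex_Dsucc i f
    rw [hsum, Finset.sum_add_distrib]
    have hdd : 0 ≤ ∑ i : Fin n, Ex n (fun t => D i (dpart f) t ^ 2) :=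
      Finset.sum_nonneg fun i _ => Ex_nonneg fun s => sq_nonneg _
    have hg : Ex n (fun t => (f (Fin.cons true t) + f (Fin.cons false t)) / 2) = Ex n (gpart f) := rfl
    rw [hg]
    linarith [IH]

def neg {n : ℕ} (s : Fin n → Bool) : Fin n → Bool := fun i => !(s i)

lemma neg_cons {n : ℕ} (b : Bool) (t : Fin n → Bool) :
    neg (Fin.cons b t) = Fin.cons (!b) (neg t) := by
  funext i
  induction i using Fin.cases <;> simp [neg]

lemma neg_involutive {n : ℕ} : Function.Involutive (neg (n := n)) := by
  intro s; funext i; simp [neg]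

lemma Ex_odd_zero {n : ℕ} {f : (Fin n → Bool) → ℝ} (h : ∀ s, f (neg s) = - f s) :
    Ex n f = 0 := by
  have hb : ∑ s, f (neg s) = ∑ s, f s :=
    Function.Bijective.sum_comp neg_involutive.bijective f
  have : ∑ s, f (neg s) = - ∑ s, f s := by
    rw [← Finset.sum_neg_distrib]
    exact Finset.sum_congr rfl fun s _ => h s
  have hz : ∑ s : Fin n → Bool, f s = 0 := by linarith [hb, this]
  unfold Ex
  rw [hz, zero_div]

theorem poincare2 : ∀ (n : ℕ) (f : (Fin n → Bool) → ℝ), (∀ s, f (neg s) = f s) →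
    Ex n (fun s => f s ^ 2) - (Ex n f) ^ 2 ≤ (1/2) * ∑ i, Ex n (fun s => D i f s ^ 2)
  | 0, f, _ => by
    simp [Ex]
  | (n+1), f, hf => by
    have hgeven : ∀ t, gpart f (neg t) = gpart f t := by
      intro t
      unfold gpart
      have h1 : Fin.cons true (neg t) = neg (Fin.cons false t) := by
        rw [neg_cons]; rfl
      have h2 : Fin.cons false (neg t) = neg (Fin.cons true t) := by
        rw [neg_cons]; rfl
      rw [h1, h2, hf, hf, add_comm]
    have hdodd : ∀ t, dpart f (neg t) = - dpart f t := by
      intro t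
      unfold dpart
      have h1 : Fin.cons true (neg t) = neg (Fin.cons false t) := by
        rw [neg_cons]; rfl
      have h2 : Fin.cons false (neg t) = neg (Fin.cons true t) := by
        rw [neg_cons]; rfl
      rw [h1, h2, hf, hf]; ring
    have IH := poincare2 n (gpart f) hgeven
    have hdmean : Ex n (dpart f) = 0 := Ex_odd_zero hdodd
    have hdP := poincare1 n (dpart f)
    rw [hdmean] at hdP
    rw [Ex_sq_succ, Ex_succ f, Fin.sum_univ_succ, Ex_D0]
    have hsum : ∑ i : Fin n, Ex (n+1) (fun s => D (Fin.succ i) f s ^ 2)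
        = ∑ i : Fin n, (Ex n (fun t => D i (gpart f) t ^ 2) + Ex n (fun t => D i (dpart f) t ^ 2)) :=
      Finset.sum_congr rfl fun i _ => Ex_Dsucc i f
    rw [hsum, Finset.sum_add_distrib]
    have hg : Ex n (fun t => (f (Fin.cons true t) + f (Fin.cons false t)) / 2) = Ex n (gpart f) := rfl
    rw [hg]
    have h0 : (0:ℝ) ^ 2 = 0 := by norm_num
    rw [h0, sub_zero] at hdP
    linarith [IH, hdP]

noncomputable def eps (b : Bool) : ℝ := if b then 1 else -1

lemma eps_not (b : Bool) : eps (!b) = - eps b := by cases b <;> simp [eps]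

lemma abs_eps (b : Bool) : |eps b| = 1 := by cases b <;> simp [eps]

noncomputable def X {n : ℕ} (c : Fin n → ℝ) (s : Fin n → Bool) : ℝ := ∑ i, eps (s i) * c i

lemma X_cons {n : ℕ} (c : Fin (n+1) → ℝ) (b : Bool) (t : Fin n → Bool) :
    X c (Fin.cons b t) = eps b * c 0 + X (fun i => c i.succ) t := by
  unfold X
  rw [Fin.sum_univ_succ]
  simp

lemma Ex_X_sq : ∀ (n : ℕ) (c : Fin n → ℝ),
    Ex n (fun s => X c s ^ 2) = ∑ i, c i ^ 2
  | 0, c => by simp [Ex, X]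
  | (n+1), c => by
    have IH := Ex_X_sq n (fun i => c i.succ)
    rw [Ex_succ]
    have hpt : (fun t => (X c (Fin.cons true t) ^ 2 + X c (Fin.cons false t) ^ 2) / 2)
        = fun t => c 0 ^ 2 + X (fun i => c i.succ) t ^ 2 := by
      funext t
      rw [X_cons, X_cons]
      simp [eps]
      ring
    rw [hpt, Ex_add, Ex_const, IH, Fin.sum_univ_succ]

lemma X_flip {n : ℕ} (c : Fin n → ℝ) (i : Fin n) (s : Fin n → Bool) :
    X c (flip i s) = X c s - 2 * eps (s i) * c i := by
  unfold X flip
  have hfun : (fun j => eps (Function.update s i (!(s i)) j) * c j)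
      = Function.update (fun j => eps (s j) * c j) i (- (eps (s i) * c i)) := by
    funext j
    by_cases h : j = i
    · subst h; simp [eps_not]
    · simp [Function.update_of_ne h]
  rw [hfun, Finset.sum_update_of_mem (Finset.mem_univ i)]
  rw [Finset.sum_eq_sum_sdiff_singleton_add (Finset.mem_univ i) (fun j => eps (s j) * c j)]
  ring

lemma X_neg {n : ℕ} (c : Fin n → ℝ) (s : Fin n → Bool) : X c (neg s) = - X c s := by
  unfold X
  rw [← Finset.sum_neg_distrib]
  exact Finset.sum_congr rfl fun j _ => by rw [neg]; rw [eps_not]; ring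

lemma D_abs_bound {n : ℕ} (c : Fin n → ℝ) (i : Fin n) (s : Fin n → Bool) :
    D i (fun s => |X c s|) s ^ 2 ≤ c i ^ 2 := by
  have h1 : |(|X c s| - |X c (flip i s)|)| ≤ |X c s - X c (flip i s)| :=
    abs_abs_sub_abs_le_abs_sub _ _
  have h2 : |X c s - X c (flip i s)| = 2 * |c i| := by
    rw [X_flip]
    have : X c s - (X c s - 2 * eps (s i) * c i) = 2 * eps (s i) * c i := by ring
    rw [this, abs_mul, abs_mul, abs_eps]
    norm_num
  have h3 : |D i (fun s => |X c s|) s| ≤ |c i| := by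
    unfold D
    rw [abs_div]
    rw [h2] at h1
    have : |(2:ℝ)| = 2 := by norm_num
    rw [this]
    linarith
  calc D i (fun s => |X c s|) s ^ 2 = |D i (fun s => |X c s|) s| ^ 2 := (sq_abs _).symm
    _ ≤ |c i| ^ 2 := by apply pow_le_pow_left₀ (abs_nonneg _) h3
    _ = c i ^ 2 := sq_abs _

end Khin

open Khin in
/-- The L¹ Khintchine inequality with constant `1/√2`: for uniform i.i.d. random
signs `s₁, …, s_n` and any `c ∈ ℝⁿ`, `E|Σᵢ sᵢ cᵢ| ≥ |c|₂ / √2`. -/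
theorem khintchine_l1 (n : ℕ) (c : Fin n → ℝ) :
    Real.sqrt (∑ i, (c i) ^ 2) / Real.sqrt 2 ≤
      (∑ s : Fin n → Bool, |∑ i, (if s i then (1 : ℝ) else -1) * c i|) / 2 ^ n := by
  have heven : ∀ s, (fun s => |X c s|) (Khin.neg s) = |X c s| := fun s => by
    simp only [X_neg, abs_neg]
  have hsq : Ex n (fun s => |X c s| ^ 2) = ∑ i, c i ^ 2 := by
    have : (fun s => |X c s| ^ 2) = fun s => X c s ^ 2 := funext fun s => sq_abs _
    rw [this]; exact Ex_X_sq n c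
  have hP := poincare2 n (fun s => |X c s|) heven
  have hDb : ∑ i, Ex n (fun s => D i (fun s => |X c s|) s ^ 2) ≤ ∑ i, c i ^ 2 :=
    Finset.sum_le_sum fun i _ =>
      (Ex_mono fun s => D_abs_bound c i s).trans_eq (Ex_const _)
  set m := Ex n (fun s => |X c s|) with hm
  have hm0 : 0 ≤ m := Ex_nonneg fun s => abs_nonneg _
  have hm2 : (∑ i, c i ^ 2) / 2 ≤ m ^ 2 := by
    rw [hsq] at hP
    linarith
  have hgoal : Real.sqrt (∑ i, c i ^ 2) / Real.sqrt 2 ≤ m := by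
    calc Real.sqrt (∑ i, c i ^ 2) / Real.sqrt 2
        = Real.sqrt ((∑ i, c i ^ 2) / 2) := by
          rw [Real.sqrt_div (by positivity) 2]
      _ ≤ Real.sqrt (m ^ 2) := Real.sqrt_le_sqrt hm2
      _ = m := Real.sqrt_sq hm0
  exact hgoal
end

section
/- Let C_{d_A}, C_{d_B} be second-order cones in ℝ^{d_A}, ℝ^{d_B}. If E ∈ ℝ^{d_A×d_B} lies in the minimal tensor product cone conv{ x yᵀ : x ∈ C_{d_A}, y ∈ C_{d_B} }, then the trace norm of the submatrix Ē (obtained by deleting row 0 and column 0) satisfies ‖Ē‖₁ ≤ E₀₀. Conversely, if all cross terms E_{i0}, E_{0j} (i,j ≥ 1) vanish and ‖Ē‖₁ ≤ E₀₀, then E lies in the minimal tensor product cone. -/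
open Matrix

/-- The second-order (ice cream) cone in `ℝ^{k+1}`, with distinguished 0-th
coordinate. -/
def soCone (k : ℕ) : Set (Fin (k + 1) → ℝ) :=
  {x | Real.sqrt (∑ i : Fin k, (x i.succ) ^ 2) ≤ x 0}

/-- The minimal tensor product of two second-order cones, under the matrix
identification `ℝ^{d_A} ⊗ ℝ^{d_B} ≅ ℝ^{d_A × d_B}`. -/
noncomputable def minTensorSO (a b : ℕ) : Set (Matrix (Fin (a + 1)) (Fin (b + 1)) ℝ) :=
  convexHull ℝ
    {X | ∃ x ∈ soCone a, ∃ y ∈ soCone b, X = Matrix.of fun i j => x i * y j}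

/-- The trace norm (sum of singular values) of a real matrix. -/
noncomputable def traceNorm {n m : ℕ} (M : Matrix (Fin n) (Fin m) ℝ) : ℝ :=
  ∑ i, Real.sqrt ((Matrix.isHermitian_conjTranspose_mul_self M).eigenvalues i)

/-!
Let `Ē = ∑ₖ σₖ uₖ vₖᵀ` be a compact singular value decomposition, so that `‖Ē‖₁ = ∑ₖ σₖ`
with `(uₖ)` and `(vₖ)` orthonormal.

If `E` is separable, test it against the linear functional `F ↦ F₀₀ - ∑ₖ uₖᵀ F̄ vₖ`. On a
product `x yᵀ` of cone elements it equals `x₀ y₀ - ∑ₖ ⟪uₖ, x̄⟫ ⟪vₖ, ȳ⟫`, which is nonnegative by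
Cauchy–Schwarz and Bessel's inequality, as `‖x̄‖ ≤ x₀` and `‖ȳ‖ ≤ y₀`. So it is nonnegative on
the convex hull, and at `E` its value is `E₀₀ - ∑ₖ σₖ = E₀₀ - ‖Ē‖₁`.

Conversely, when the cross terms vanish,
`E = (E₀₀ - ‖Ē‖₁) e₀e₀ᵀ + ∑ₖ (σₖ / 2) ((1, uₖ)(1, vₖ)ᵀ + (1, -uₖ)(1, -vₖ)ᵀ)`
is a sum of products of cone elements, and the convex hull of a set closed under nonnegative
scaling is closed under addition.
-/

theorem EuclideanSpace.real_inner_eq_dotProduct {n : Type*} [Fintype n]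
    (x y : EuclideanSpace ℝ n) : inner ℝ x y = ⇑x ⬝ᵥ ⇑y := by
  rw [inner_eq_star_dotProduct, star_trivial, dotProduct_comm]

theorem Fintype.sum_subtype_eq_sum_of_eq_zero {ι M : Type*} [Fintype ι] [AddCommMonoid M]
    (p : ι → Prop) [DecidablePred p] (f : ι → M) (h : ∀ i, ¬p i → f i = 0) :
    ∑ i : {i // p i}, f i = ∑ i, f i := by
  rw [← Fintype.sum_subtype_add_sum_subtype p f, Fintype.sum_eq_zero (fun i : {i // ¬p i} => f i)
    (fun i => h i i.2), add_zero]

section ConvexHullOfCone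

open scoped Pointwise

variable {E : Type*} [AddCommGroup E] [Module ℝ E] {s : Set E}

theorem smul_mem_convexHull_of_smul_mem (hs : ∀ c : ℝ, 0 ≤ c → ∀ x ∈ s, c • x ∈ s) {c : ℝ}
    (hc : 0 ≤ c) {x : E} (hx : x ∈ convexHull ℝ s) : c • x ∈ convexHull ℝ s := by
  have hsub : c • convexHull ℝ s ⊆ convexHull ℝ s := by
    rw [← convexHull_smul]
    exact convexHull_mono (Set.smul_set_subset_iff.2 fun y hy => hs c hc y hy)
  exact hsub (Set.smul_mem_smul_set hx)

theorem add_mem_convexHull_of_smul_mem (hs : ∀ c : ℝ, 0 ≤ c → ∀ x ∈ s, c • x ∈ s) {x y : E}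
    (hx : x ∈ convexHull ℝ s) (hy : y ∈ convexHull ℝ s) : x + y ∈ convexHull ℝ s := by
  have h := convex_convexHull ℝ s (smul_mem_convexHull_of_smul_mem hs zero_le_two hx)
    (smul_mem_convexHull_of_smul_mem hs zero_le_two hy) (by norm_num : (0 : ℝ) ≤ 1 / 2)
    (by norm_num : (0 : ℝ) ≤ 1 / 2) (by norm_num)
  simpa [smul_smul] using h

theorem sum_mem_convexHull_of_smul_mem (hs : ∀ c : ℝ, 0 ≤ c → ∀ x ∈ s, c • x ∈ s)
    (h0 : (0 : E) ∈ s) {ι : Type*} (t : Finset ι) {f : ι → E} (hf : ∀ i ∈ t, f i ∈ s) :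
    ∑ i ∈ t, f i ∈ convexHull ℝ s :=
  Finset.sum_induction f (· ∈ convexHull ℝ s) (fun _ _ => add_mem_convexHull_of_smul_mem hs)
    (subset_convexHull ℝ s h0) fun i hi => subset_convexHull ℝ s (hf i hi)

end ConvexHullOfCone

theorem Orthonormal.sqrt_sum_inner_sq_le_norm {ι E : Type*} [Fintype ι] [NormedAddCommGroup E]
    [InnerProductSpace ℝ E] {w : ι → E} (hw : Orthonormal ℝ w) (z : E) :
    √(∑ k, inner ℝ (w k) z ^ 2) ≤ ‖z‖ := by
  refine Real.sqrt_le_iff.2 ⟨norm_nonneg z, ?_⟩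
  simpa [Real.norm_eq_abs, sq_abs] using hw.sum_inner_products_le z (s := Finset.univ)

theorem Orthonormal.sum_inner_mul_inner_le {ι E F : Type*} [Fintype ι] [NormedAddCommGroup E]
    [InnerProductSpace ℝ E] [NormedAddCommGroup F] [InnerProductSpace ℝ F] {u : ι → E}
    {v : ι → F} (hu : Orthonormal ℝ u) (hv : Orthonormal ℝ v) (x : E) (y : F) :
    ∑ k, inner ℝ (u k) x * inner ℝ (v k) y ≤ ‖x‖ * ‖y‖ :=
  calc ∑ k, inner ℝ (u k) x * inner ℝ (v k) y
      ≤ √(∑ k, inner ℝ (u k) x ^ 2) * √(∑ k, inner ℝ (v k) y ^ 2) :=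
        Real.sum_mul_le_sqrt_mul_sqrt _ _ _
    _ ≤ ‖x‖ * ‖y‖ := mul_le_mul (hu.sqrt_sum_inner_sq_le_norm x) (hv.sqrt_sum_inner_sq_le_norm y)
        (Real.sqrt_nonneg _) (norm_nonneg x)

theorem Matrix.eq_sum_vecMulVec_mulVec_orthonormalBasis {ι n m : Type*} [Fintype ι] [Fintype m]
    [DecidableEq m] (M : Matrix n m ℝ) (b : OrthonormalBasis ι ℝ (EuclideanSpace ℝ m)) :
    M = ∑ k, vecMulVec (M *ᵥ b k) (b k) := by
  ext i j
  have hcol : (Pi.single j 1 : m → ℝ) = ∑ k, b k j • ⇑(b k) := by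
    simpa [EuclideanSpace.inner_single_right] using
      (congrArg WithLp.ofLp (b.sum_repr' (EuclideanSpace.single j 1))).symm
  calc M i j = (M *ᵥ Pi.single j 1) i := by simp
    _ = _ := by simp [hcol, mulVec_sum, mulVec_smul, Matrix.sum_apply, vecMulVec_apply, mul_comm]

theorem Matrix.mulVec_eigenvectorBasis_dotProduct {n m : Type*} [Fintype n] [Fintype m]
    [DecidableEq m] (M : Matrix n m ℝ) (k l : m) :
    (M *ᵥ (isHermitian_conjTranspose_mul_self M).eigenvectorBasis k) ⬝ᵥ
        (M *ᵥ (isHermitian_conjTranspose_mul_self M).eigenvectorBasis l) =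
      if k = l then (isHermitian_conjTranspose_mul_self M).eigenvalues k else 0 := by
  set h := isHermitian_conjTranspose_mul_self M
  have horth := orthonormal_iff_ite.1 h.eigenvectorBasis.orthonormal k l
  rw [EuclideanSpace.real_inner_eq_dotProduct] at horth
  rw [← vecMul_transpose, ← dotProduct_mulVec, mulVec_mulVec,
    ← conjTranspose_eq_transpose_of_trivial, h.mulVec_eigenvectorBasis, dotProduct_smul, horth,
    smul_eq_mul, mul_ite, mul_one, mul_zero]
  split_ifs with hkl
  · rw [hkl]
  · rfl

theorem Matrix.exists_compact_svd {n m : ℕ} (M : Matrix (Fin n) (Fin m) ℝ) :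
    ∃ (ι : Type) (_ : Fintype ι) (σ : ι → ℝ) (u : ι → EuclideanSpace ℝ (Fin n))
      (v : ι → EuclideanSpace ℝ (Fin m)), (∀ k, 0 ≤ σ k) ∧ ∑ k, σ k = traceNorm M ∧
      Orthonormal ℝ u ∧ Orthonormal ℝ v ∧ M = ∑ k, σ k • vecMulVec ⇑(u k) ⇑(v k) := by
  have hdot := mulVec_eigenvectorBasis_dotProduct M
  set h := isHermitian_conjTranspose_mul_self M
  set b := h.eigenvectorBasis
  set σ : Fin m → ℝ := fun k => √(h.eigenvalues k)
  have hσ_sq (k) : σ k ^ 2 = h.eigenvalues k :=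
    Real.sq_sqrt (eigenvalues_conjTranspose_mul_self_nonneg M k)
  have hMb_zero (k) (hk : σ k = 0) : M *ᵥ b k = 0 := by
    refine dotProduct_self_eq_zero.1 ?_
    rw [hdot, if_pos rfl, ← hσ_sq, hk, zero_pow two_ne_zero]
  -- `σₖ⁻¹ M bₖ` is a unit vector exactly when `σₖ ≠ 0`; the other terms of
  -- `M = ∑ₖ (M bₖ) bₖᵀ` vanish.
  let u : {k // σ k ≠ 0} → EuclideanSpace ℝ (Fin n) :=
    fun k => WithLp.toLp 2 ((σ k)⁻¹ • (M *ᵥ b k))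
  refine ⟨{k // σ k ≠ 0}, inferInstance, fun k => σ k, u, fun k => b k,
    fun k => Real.sqrt_nonneg _, ?_, ?_, b.orthonormal.comp _ Subtype.val_injective, ?_⟩
  · exact Fintype.sum_subtype_eq_sum_of_eq_zero _ σ fun k hk => not_not.1 hk
  · rw [orthonormal_iff_ite]
    rintro ⟨k, hk⟩ ⟨l, hl⟩
    simp only [u, EuclideanSpace.real_inner_eq_dotProduct, smul_dotProduct,
      dotProduct_smul, hdot, smul_eq_mul]
    by_cases hkl : k = l
    · subst hkl
      simp only [if_pos, ← hσ_sq]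
      field_simp
    · simp [hkl]
  · conv_lhs => rw [eq_sum_vecMulVec_mulVec_orthonormalBasis M b]
    rw [← Fintype.sum_subtype_eq_sum_of_eq_zero (fun k => σ k ≠ 0) _
      fun k hk => by rw [hMb_zero k (not_not.1 hk), zero_vecMulVec]]
    refine Finset.sum_congr rfl fun k _ => ?_
    simp [u, smul_smul, mul_inv_cancel₀ k.2]

theorem Matrix.sum_smul_vecMulVec_mulVec_of_orthonormal {ι n m : Type*} [Fintype ι] [DecidableEq ι]
    [Fintype m] (σ : ι → ℝ) (u : ι → EuclideanSpace ℝ n) {v : ι → EuclideanSpace ℝ m}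
    (hv : Orthonormal ℝ v) (k : ι) :
    (∑ l, σ l • vecMulVec ⇑(u l) ⇑(v l)) *ᵥ ⇑(v k) = σ k • ⇑(u k) := by
  have hdot (l : ι) : ⇑(v l) ⬝ᵥ ⇑(v k) = if k = l then 1 else 0 := by
    rw [← orthonormal_iff_ite.1 hv k l, EuclideanSpace.real_inner_eq_dotProduct, dotProduct_comm]
  simp [sum_mulVec, smul_mulVec, vecMulVec_mulVec, hdot]

section SecondOrderCone

variable {k : ℕ}

theorem mem_soCone_iff_norm_le {x : Fin (k + 1) → ℝ} :
    x ∈ soCone k ↔ ‖WithLp.toLp 2 (Fin.tail x)‖ ≤ x 0 := by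
  simp [soCone, EuclideanSpace.norm_eq, Fin.tail]

theorem zero_mem_soCone : (0 : Fin (k + 1) → ℝ) ∈ soCone k := by
  simp [soCone]

theorem smul_mem_soCone {c : ℝ} (hc : 0 ≤ c) {x : Fin (k + 1) → ℝ} (hx : x ∈ soCone k) :
    c • x ∈ soCone k := by
  rw [mem_soCone_iff_norm_le] at hx ⊢
  rw [show Fin.tail (c • x) = c • Fin.tail x from rfl, WithLp.toLp_smul, norm_smul,
    Real.norm_of_nonneg hc]
  exact mul_le_mul_of_nonneg_left hx hc

theorem cons_mem_soCone {t : ℝ} {w : EuclideanSpace ℝ (Fin k)} (hw : ‖w‖ ≤ t) :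
    (Fin.cons t ⇑w : Fin (k + 1) → ℝ) ∈ soCone k := by
  simpa [mem_soCone_iff_norm_le] using hw

end SecondOrderCone

theorem sum_vecMulVec_mem_minTensorSO {a b : ℕ} {ι : Type*} (t : Finset ι)
    {x : ι → Fin (a + 1) → ℝ} {y : ι → Fin (b + 1) → ℝ} (hx : ∀ i ∈ t, x i ∈ soCone a)
    (hy : ∀ i ∈ t, y i ∈ soCone b) : ∑ i ∈ t, vecMulVec (x i) (y i) ∈ minTensorSO a b := by
  refine sum_mem_convexHull_of_smul_mem ?_ ?_ t fun i hi => ⟨x i, hx i hi, y i, hy i hi, rfl⟩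
  · rintro c hc _ ⟨x, hx, y, hy, rfl⟩
    exact ⟨c • x, smul_mem_soCone hc hx, y, hy, by ext; simp [mul_assoc]⟩
  · exact ⟨0, zero_mem_soCone, 0, zero_mem_soCone, by ext; simp⟩

theorem traceNorm_submatrix_succ_le_of_mem_minTensorSO {a b : ℕ}
    {E : Matrix (Fin (a + 1)) (Fin (b + 1)) ℝ} (hE : E ∈ minTensorSO a b) :
    traceNorm (E.submatrix Fin.succ Fin.succ) ≤ E 0 0 := by
  classical
  obtain ⟨ι, _, σ, u, v, -, hσ_sum, hu, hv, hE_svd⟩ :=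
    exists_compact_svd (E.submatrix Fin.succ Fin.succ)
  let φ : Matrix (Fin (a + 1)) (Fin (b + 1)) ℝ → ℝ := fun F =>
    F 0 0 - ∑ k, ⇑(u k) ⬝ᵥ (F.submatrix Fin.succ Fin.succ *ᵥ ⇑(v k))
  have hφ_lin : IsLinearMap ℝ φ := by
    constructor
    · intro F G
      have : (F + G).submatrix Fin.succ Fin.succ =
        F.submatrix Fin.succ Fin.succ + G.submatrix Fin.succ Fin.succ := rfl
      simp only [φ, this, Matrix.add_apply, add_mulVec, dotProduct_add, Finset.sum_add_distrib]
      ring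
    · intro c F
      have : (c • F).submatrix Fin.succ Fin.succ = c • F.submatrix Fin.succ Fin.succ := rfl
      simp only [φ, this, Matrix.smul_apply, smul_mulVec, dotProduct_smul, smul_eq_mul,
        Finset.mul_sum, mul_sub]
  have hφ_gen : {X | ∃ x ∈ soCone a, ∃ y ∈ soCone b, X = Matrix.of fun i j => x i * y j} ⊆
      {F | 0 ≤ φ F} := by
    rintro _ ⟨x, hx, y, hy, rfl⟩
    have key := hu.sum_inner_mul_inner_le hv (WithLp.toLp 2 (Fin.tail x))
      (WithLp.toLp 2 (Fin.tail y))
    rw [mem_soCone_iff_norm_le] at hx hy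
    have hφ_prod : φ (of fun i j => x i * y j) = x 0 * y 0 -
        ∑ k, inner ℝ (u k) (WithLp.toLp 2 (Fin.tail x)) *
          inner ℝ (v k) (WithLp.toLp 2 (Fin.tail y)) := by
      have : (of fun i j => x i * y j).submatrix Fin.succ Fin.succ =
        vecMulVec (Fin.tail x) (Fin.tail y) := rfl
      simp [φ, this, EuclideanSpace.real_inner_eq_dotProduct, vecMulVec_mulVec, dotProduct_comm,
        mul_comm]
    have := mul_le_mul hx hy (norm_nonneg _) ((norm_nonneg _).trans hx)
    change 0 ≤ φ _
    rw [hφ_prod]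
    linarith
  have hφE : φ E = E 0 0 - traceNorm (E.submatrix Fin.succ Fin.succ) := by
    rw [← hσ_sum]
    simp only [φ, hE_svd, sum_smul_vecMulVec_mulVec_of_orthonormal σ u hv, dotProduct_smul,
      ← EuclideanSpace.real_inner_eq_dotProduct, real_inner_self_eq_norm_sq, hu.1, smul_eq_mul]
    simp
  have hφE_nonneg : 0 ≤ φ E := convexHull_min hφ_gen (convex_halfSpace_ge hφ_lin 0) hE
  linarith

theorem mem_minTensorSO_of_traceNorm_le {a b : ℕ} {E : Matrix (Fin (a + 1)) (Fin (b + 1)) ℝ}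
    (hcol : ∀ i : Fin a, E i.succ 0 = 0) (hrow : ∀ j : Fin b, E 0 j.succ = 0)
    (hE : traceNorm (E.submatrix Fin.succ Fin.succ) ≤ E 0 0) : E ∈ minTensorSO a b := by
  obtain ⟨ι, _, σ, u, v, hσ, hσ_sum, hu, hv, hE_svd⟩ :=
    exists_compact_svd (E.submatrix Fin.succ Fin.succ)
  let sgn : Bool → ℝ := fun s => if s then 1 else -1
  let x : Option (ι × Bool) → Fin (a + 1) → ℝ
    | none => Fin.cons (E 0 0 - ∑ k, σ k) ⇑(0 : EuclideanSpace ℝ (Fin a))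
    | some (k, s) => (σ k / 2) • Fin.cons 1 ⇑(sgn s • u k)
  let y : Option (ι × Bool) → Fin (b + 1) → ℝ
    | none => Fin.cons 1 ⇑(0 : EuclideanSpace ℝ (Fin b))
    | some (k, s) => Fin.cons 1 ⇑(sgn s • v k)
  have hsgn (s : Bool) : ‖sgn s‖ = 1 := by cases s <;> simp [sgn]
  have hx : ∀ t, x t ∈ soCone a
    | none => cons_mem_soCone (by simpa [hσ_sum] using hE)
    | some (k, s) => smul_mem_soCone (by linarith [hσ k]) <|
        cons_mem_soCone (by rw [norm_smul, hsgn, hu.1 k, one_mul])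
  have hy : ∀ t, y t ∈ soCone b
    | none => cons_mem_soCone (by simp)
    | some (k, s) => cons_mem_soCone (by rw [norm_smul, hsgn, hv.1 k, one_mul])
  have hdecomp : E = ∑ t, vecMulVec (x t) (y t) := by
    ext i j
    cases i using Fin.cases <;> cases j using Fin.cases <;>
      simp [x, y, sgn, Fintype.sum_option, Fintype.sum_prod_type, hcol, hrow, vecMulVec_apply,
        Matrix.sum_apply]
    case zero.zero =>
      rw [← Finset.sum_congr rfl fun k _ => (mul_div_cancel₀ (σ k) two_ne_zero).symm]
      ring
    case succ.succ i j =>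
      rw [show E i.succ j.succ = _ from congrFun₂ hE_svd i j, Matrix.sum_apply]
      exact Finset.sum_congr rfl fun k _ => by simp [vecMulVec_apply]; ring
  rw [hdecomp]
  exact sum_vecMulVec_mem_minTensorSO _ (fun t _ => hx t) fun t _ => hy t

/-- Separability criterion for effects on two second-order cones: membership in
the minimal tensor product implies `‖Ē‖₁ ≤ E₀₀`, and conversely if all the
cross terms of `E` vanish then `‖Ē‖₁ ≤ E₀₀` implies membership. -/
theorem minTensorSO_traceNorm_criterion (a b : ℕ) (E : Matrix (Fin (a + 1)) (Fin (b + 1)) ℝ) :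
    (E ∈ minTensorSO a b →
      traceNorm (Matrix.of fun (i : Fin a) (j : Fin b) => E i.succ j.succ) ≤ E 0 0) ∧
    (((∀ i : Fin a, E i.succ 0 = 0) ∧ (∀ j : Fin b, E 0 j.succ = 0) ∧
        traceNorm (Matrix.of fun (i : Fin a) (j : Fin b) => E i.succ j.succ) ≤ E 0 0) →
      E ∈ minTensorSO a b) :=
  ⟨traceNorm_submatrix_succ_le_of_mem_minTensorSO,
    fun ⟨hcol, hrow, hE⟩ => mem_minTensorSO_of_traceNorm_le hcol hrow hE⟩
end

section
/- In an arbitrary GPT (V, C, u) with informationally complete sets of measurements, the balanced data hiding ratio R̃(M) (defined using pairs of states with equal a priori probabilities 1/2) and the standard data hiding ratio R(M) (over all a priori probabilities) satisfy R̃(M) ≤ R(M) ≤ 2·R̃(M) + 1. -/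
/-!
Decompose a state `x` as `x = y + u(x) • ω` with `u y = 0`. Since `|u x| ≤ N x` and
`N ω = B ω = 1`, the triangle inequality gives `N y ≤ 2 N x` and
`B x ≤ B y + N x ≤ R̃ · N y + N x ≤ (2 R̃ + 1) N x`. The only analytic input is that the
ratios are bounded at all: in finite dimension `B / N` is continuous on the compact unit sphere
and invariant under scaling.
-/

namespace Seminorm

variable {V : Type*}

section FiniteDimensional

variable [NormedAddCommGroup V] [NormedSpace ℝ V] [FiniteDimensional ℝ V]

theorem continuous_of_finiteDimensional (p : Seminorm ℝ V) : Continuous p :=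
  p.convexOn.locallyLipschitz.continuous

theorem bddAbove_ratio (N B : Seminorm ℝ V) (hN : ∀ x, N x = 0 → x = 0) :
    BddAbove {r : ℝ | ∃ x : V, x ≠ 0 ∧ r = B x / N x} := by
  have hcont : ContinuousOn (fun x => B x / N x) (Metric.sphere (0 : V) 1) :=
    B.continuous_of_finiteDimensional.continuousOn.div
      N.continuous_of_finiteDimensional.continuousOn
      fun x hx h => ne_zero_of_mem_unit_sphere ⟨x, hx⟩ (hN x h)
  refine ((isCompact_sphere 0 1).image_of_continuousOn hcont).bddAbove.mono ?_
  rintro r ⟨x, hx, rfl⟩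
  have hx' : 0 < ‖x‖ := norm_pos_iff.mpr hx
  refine ⟨‖x‖⁻¹ • x, by simp [norm_smul, hx'.ne'], ?_⟩
  simp only [map_smul_eq_mul, norm_inv, norm_norm]
  exact mul_div_mul_left _ _ (inv_ne_zero hx'.ne')

end FiniteDimensional

section Real

variable [AddCommGroup V] [Module ℝ V]

theorem le_sSup_ratio_mul (N B : Seminorm ℝ V) (hN : ∀ x, N x = 0 → x = 0) {p : V → Prop}
    (hbdd : BddAbove {r : ℝ | ∃ x : V, x ≠ 0 ∧ p x ∧ r = B x / N x}) {x : V} (hx : p x) :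
    B x ≤ sSup {r : ℝ | ∃ x : V, x ≠ 0 ∧ p x ∧ r = B x / N x} * N x := by
  rcases eq_or_ne x 0 with rfl | hx0
  · simp
  · have hNx : 0 < N x := (apply_nonneg N x).lt_of_ne fun h => hx0 (hN x h.symm)
    exact (div_le_iff₀ hNx).mp (le_csSup hbdd ⟨x, hx0, hx, rfl⟩)

theorem le_two_mul_add_one_mul_of_ker (N B : Seminorm ℝ V) (u : V →ₗ[ℝ] ℝ)
    (hu : ∀ x, |u x| ≤ N x) {ω : V} (hBω : B ω ≤ 1) (hNω : N ω ≤ 1) (huω : u ω = 1)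
    {R : ℝ} (hR : 0 ≤ R) (hker : ∀ y, u y = 0 → B y ≤ R * N y) (x : V) :
    B x ≤ (2 * R + 1) * N x := by
  set y := x - u x • ω
  have hy : u y = 0 := by simp [y, huω]
  have hNy : N y ≤ 2 * N x :=
    calc N y ≤ N x + |u x| * N ω := by
          simpa only [map_smul_eq_mul, Real.norm_eq_abs] using map_sub_le_add N x (u x • ω)
      _ ≤ N x + N x * 1 := by gcongr; exact hu x
      _ = 2 * N x := by ring
  calc B x = B (y + u x • ω) := by simp [y]
    _ ≤ B y + |u x| * B ω := by
        simpa only [map_smul_eq_mul, Real.norm_eq_abs] using map_add_le_add B y (u x • ω)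
    _ ≤ R * (2 * N x) + N x * 1 := by
        gcongr
        · exact (hker y hy).trans (by gcongr)
        · exact hu x
    _ = (2 * R + 1) * N x := by ring

end Real

end Seminorm

open Seminorm in
theorem balanced_vs_standard_data_hiding_ratio_general
    {V : Type*} [NormedAddCommGroup V] [NormedSpace ℝ V] [FiniteDimensional ℝ V]
    (N B : Seminorm ℝ V)
    (hNdef : ∀ x : V, N x = 0 → x = 0)
    (u : V →ₗ[ℝ] ℝ)
    (hu : ∀ x : V, |u x| ≤ N x)
    (hω : ∃ ω : V, B ω = 1 ∧ N ω = 1 ∧ u ω = 1) :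
    sSup {r : ℝ | ∃ y : V, y ≠ 0 ∧ u y = 0 ∧ r = B y / N y} ≤
        sSup {r : ℝ | ∃ x : V, x ≠ 0 ∧ r = B x / N x} ∧
      sSup {r : ℝ | ∃ x : V, x ≠ 0 ∧ r = B x / N x} ≤
        2 * sSup {r : ℝ | ∃ y : V, y ≠ 0 ∧ u y = 0 ∧ r = B y / N y} + 1 := by
  obtain ⟨ω, hBω, hNω, huω⟩ := hω
  have hratio_nonneg (x : V) : 0 ≤ B x / N x := div_nonneg (apply_nonneg B x) (apply_nonneg N x)
  have hT := bddAbove_ratio N B hNdef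
  have hST : {r : ℝ | ∃ y : V, y ≠ 0 ∧ u y = 0 ∧ r = B y / N y} ⊆
      {r : ℝ | ∃ x : V, x ≠ 0 ∧ r = B x / N x} := fun _ ⟨y, hy, _, hr⟩ => ⟨y, hy, hr⟩
  have hR : 0 ≤ sSup {r : ℝ | ∃ y : V, y ≠ 0 ∧ u y = 0 ∧ r = B y / N y} :=
    Real.sSup_nonneg fun _ ⟨y, _, _, hr⟩ => hr ▸ hratio_nonneg y
  refine ⟨Real.sSup_le (fun r hr => le_csSup hT (hST hr))
    (Real.sSup_nonneg fun _ ⟨x, _, hr⟩ => hr ▸ hratio_nonneg x), ?_⟩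
  refine Real.sSup_le (fun r ⟨x, hx, hr⟩ => ?_) (by positivity)
  have hNx : 0 < N x := (apply_nonneg N x).lt_of_ne fun h => hx (hNdef x h.symm)
  rw [hr, div_le_iff₀ hNx]
  exact le_two_mul_add_one_mul_of_ker N B u hu hBω.le hNω.le huω hR
    (fun y hy => le_sSup_ratio_mul N B hNdef (hT.mono hST) hy) x

/-- Balanced versus standard data hiding ratios. Abstractly: if `N ≤ B` are a
norm and a seminorm on a finite-dimensional real space, `u` is a functional with
`|u(x)| ≤ N(x)`, and there is a state `ω` with `B(ω) = N(ω) = u(ω) = 1`, then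
the balanced ratio `R̃ = sup {B y / N y : y ≠ 0, u y = 0}` and the standard
ratio `R = sup {B x / N x : x ≠ 0}` satisfy `R̃ ≤ R ≤ 2 R̃ + 1`. -/
theorem balanced_vs_standard_data_hiding_ratio
    {V : Type*} [NormedAddCommGroup V] [NormedSpace ℝ V] [FiniteDimensional ℝ V]
    (N B : Seminorm ℝ V)
    (hNdef : ∀ x : V, N x = 0 → x = 0)
    (hNB : ∀ x : V, N x ≤ B x)
    (u : V →ₗ[ℝ] ℝ)
    (hu : ∀ x : V, |u x| ≤ N x)
    (hω : ∃ ω : V, B ω = 1 ∧ N ω = 1 ∧ u ω = 1) :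
    sSup {r : ℝ | ∃ y : V, y ≠ 0 ∧ u y = 0 ∧ r = B y / N y} ≤
        sSup {r : ℝ | ∃ x : V, x ≠ 0 ∧ r = B x / N x} ∧
      sSup {r : ℝ | ∃ x : V, x ≠ 0 ∧ r = B x / N x} ≤
        2 * sSup {r : ℝ | ∃ y : V, y ≠ 0 ∧ u y = 0 ∧ r = B y / N y} + 1 :=
  balanced_vs_standard_data_hiding_ratio_general N B hNdef u hu hω
end
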